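/- Let D be a Hermitian Dirac operator with zero diagonal on n vertices and let i, j be two vertices connected in G_D. Let P(i,j) ⊆ {1,…,n} be the set of vertices lying on some path from i to j in G_D (a path being a walk with no repeated edge), and let D' be the principal submatrix of D indexed by P(i,j). Then d^D(i,j) = d^{D'}(i,j), where the right-hand side is the noncommutative distance computed in the submatrix D'. -/

import Mathlib

open scoped ENNReal

/-- The operator norm on square matrices induced by the Euclidean (ℓ²) norm. -/
noncomputable def opNorm {ι : Type*} [Finite ι] (M : Matrix ι ι ℂ) : ℝ :=
  letI := Fintype.ofFinite ι
  letI := Classical.decEq ι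
  ‖Matrix.toEuclideanCLM (𝕜 := ℂ) M‖

/-- The commutator `[D, π(a)]` of a matrix with the diagonal matrix of `a`. -/
noncomputable def commD {ι : Type*} [Finite ι] (D : Matrix ι ι ℂ) (a : ι → ℂ) : Matrix ι ι ℂ :=
  letI := Fintype.ofFinite ι
  letI := Classical.decEq ι
  D * Matrix.diagonal a - Matrix.diagonal a * D

/-- Connes' noncommutative distance associated to the Dirac operator `D`. -/
noncomputable def ncDist {ι : Type*} [Finite ι] (D : Matrix ι ι ℂ) (i j : ι) : ℝ≥0∞ :=
  ⨆ (a : ι → ℂ) (_ : opNorm (commD D a) ≤ 1), ENNReal.ofReal ‖a i - a j‖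

/-- The weight of an edge: the inverse of `|D i j|` (infinite if `D i j = 0`). -/
noncomputable def eWeight {ι : Type*} (D : Matrix ι ι ℂ) (u v : ι) : ℝ≥0∞ :=
  (ENNReal.ofReal ‖D u v‖)⁻¹

/-- Adjacency in the graph `G_D`. -/
def Adjac {ι : Type*} (D : Matrix ι ι ℂ) (u v : ι) : Prop := u ≠ v ∧ D u v ≠ 0

/-- The length of a walk `i :: p` computed with weights `eWeight D`. -/
noncomputable def walkLength {ι : Type*} (D : Matrix ι ι ℂ) : ι → List ι → ℝ≥0∞
  | _, [] => 0
  | u, v :: rest => eWeight D u v + walkLength D v rest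

/-- `i :: p` is a walk from `i` to `j` in the graph `G_D`. -/
def IsWalk {ι : Type*} (D : Matrix ι ι ℂ) (i j : ι) (p : List ι) : Prop :=
  List.Chain (Adjac D) i p ∧ (i :: p).getLast (List.cons_ne_nil _ _) = j

/-- `i` and `j` lie in the same connected component of `G_D`. -/
def Conn {ι : Type*} (D : Matrix ι ι ℂ) (i j : ι) : Prop := ∃ p, IsWalk D i j p

/-- The geodesic (weighted shortest-path) distance on `G_D`. -/
noncomputable def gDist {ι : Type*} (D : Matrix ι ι ℂ) (i j : ι) : ℝ≥0∞ :=
  ⨅ (p : List ι) (_ : IsWalk D i j p), walkLength D i p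


/-- The list of edges (as unordered pairs) of the walk `i :: p`. -/
def walkEdges {ι : Type*} : ι → List ι → List (Sym2 ι)
  | _, [] => []
  | u, v :: rest => s(u, v) :: walkEdges v rest

/-- A path (trail): a walk with no repeated edge. -/
def IsTrail {ι : Type*} (D : Matrix ι ι ℂ) (i j : ι) (p : List ι) : Prop :=
  IsWalk D i j p ∧ (walkEdges i p).Nodup

/-- `P(i,j)`: the set of vertices lying on some path (trail) from `i` to `j`. -/
def pathSet {ι : Type*} (D : Matrix ι ι ℂ) (i j : ι) : Set ι :=
  {v | ∃ p, IsTrail D i j p ∧ v ∈ i :: p}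

/-!
For `d^D ≤ d^{D'}`, restrict a function `a` to `P = P(i,j)`: the commutator `[D', a|_P]` is a
compression of `[D, a]`, so its norm does not increase. For `d^{D'} ≤ d^D`, extend a function
`a'` on `P` to be constant on each connected component of `G_D` with the edges inside `P`
deleted; then `[D, a]` vanishes off `P × P`, where it equals `[D', a']`, and the norms agree.
This works because such a component meets `P` in at most one vertex. Indeed, let `Q` be a trail
from `u ∈ P` to `w ∈ P` with no edge inside `P`, and `T` an `i`–`j` trail through `u`. Follow an
`i`–`j` trail from `w` towards `j` up to the first vertex `z` it shares with `T`; splicing `Q`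
and this segment into `T` at `u` and `z` gives an `i`–`j` trail, so every vertex of `Q` lies in
`P`, forcing `Q` to be trivial.
-/

section L2OpNorm

open Matrix
open scoped Matrix.Norms.L2Operator

variable {ι κ : Type*} [Fintype ι] [DecidableEq ι] [Fintype κ] [DecidableEq κ]

lemma opNorm_eq_l2_opNorm (M : Matrix ι ι ℂ) : opNorm M = ‖M‖ := by
  unfold opNorm
  rw [Subsingleton.elim (Fintype.ofFinite ι) ‹_›, Subsingleton.elim (Classical.decEq ι) ‹_›]
  exact l2_opNorm_toEuclideanCLM M

def inclusionMatrix (e : κ → ι) : Matrix ι κ ℂ := (1 : Matrix ι ι ℂ).submatrix id e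

omit [Fintype κ] [DecidableEq κ] in
lemma submatrix_eq_conjTranspose_mul_mul (M : Matrix ι ι ℂ) (e : κ → ι) :
    M.submatrix e e = (inclusionMatrix e)ᴴ * M * inclusionMatrix e := by
  ext k l
  simp [inclusionMatrix, mul_apply, one_apply]

omit [Fintype ι] in
lemma inclusionMatrix_mul_mul_conjTranspose_apply (A : Matrix κ κ ℂ) {e : κ → ι}
    (he : Function.Injective e) (k l : κ) :
    (inclusionMatrix e * A * (inclusionMatrix e)ᴴ) (e k) (e l) = A k l := by
  simp [inclusionMatrix, mul_apply, one_apply, he.eq_iff]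

omit [Fintype ι] [DecidableEq κ] in
lemma inclusionMatrix_mul_mul_conjTranspose_apply_of_notMem (A : Matrix κ κ ℂ) {e : κ → ι}
    {x y : ι} (h : x ∉ Set.range e ∨ y ∉ Set.range e) :
    (inclusionMatrix e * A * (inclusionMatrix e)ᴴ) x y = 0 := by
  rcases h with h | h <;> simp only [Set.mem_range, not_exists] at h <;>
    simp [inclusionMatrix, mul_apply, one_apply, h, Ne.symm (h _)]

lemma l2_opNorm_inclusionMatrix_le {e : κ → ι} (he : Function.Injective e) :
    ‖inclusionMatrix e‖ ≤ 1 := by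
  have h1 : ‖(1 : Matrix κ κ ℂ)‖ ≤ 1 := by
    rw [← l2_opNorm_toEuclideanCLM, map_one]
    exact ContinuousLinearMap.norm_id_le
  have h2 : (inclusionMatrix e)ᴴ * inclusionMatrix e = 1 := by
    rw [← Matrix.mul_one (inclusionMatrix e)ᴴ, ← submatrix_eq_conjTranspose_mul_mul,
      submatrix_one e he]
  have h3 := l2_opNorm_conjTranspose_mul_self (inclusionMatrix e)
  rw [h2] at h3
  nlinarith [norm_nonneg (inclusionMatrix e)]

lemma l2_opNorm_submatrix_le (M : Matrix ι ι ℂ) {e : κ → ι} (he : Function.Injective e) :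
    ‖M.submatrix e e‖ ≤ ‖M‖ := by
  have hE := l2_opNorm_inclusionMatrix_le he
  rw [submatrix_eq_conjTranspose_mul_mul]
  calc ‖(inclusionMatrix e)ᴴ * M * inclusionMatrix e‖
      ≤ ‖inclusionMatrix e‖ * ‖M‖ * ‖inclusionMatrix e‖ := by
        grw [l2_opNorm_mul, l2_opNorm_mul, l2_opNorm_conjTranspose]
    _ ≤ 1 * ‖M‖ * 1 := by gcongr
    _ = ‖M‖ := by ring

lemma l2_opNorm_le_submatrix (M : Matrix ι ι ℂ) {e : κ → ι} (he : Function.Injective e)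
    (hM : ∀ x y, M x y ≠ 0 → x ∈ Set.range e ∧ y ∈ Set.range e) :
    ‖M‖ ≤ ‖M.submatrix e e‖ := by
  have hE := l2_opNorm_inclusionMatrix_le he
  have hM' : M = inclusionMatrix e * M.submatrix e e * (inclusionMatrix e)ᴴ := by
    ext x y
    by_cases hxy : x ∈ Set.range e ∧ y ∈ Set.range e
    · obtain ⟨⟨k, rfl⟩, ⟨l, rfl⟩⟩ := hxy
      rw [inclusionMatrix_mul_mul_conjTranspose_apply _ he, submatrix_apply]
    · rw [inclusionMatrix_mul_mul_conjTranspose_apply_of_notMem _ (not_and_or.1 hxy)]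
      exact not_not.1 (mt (hM x y) hxy)
  calc ‖M‖ = ‖inclusionMatrix e * M.submatrix e e * (inclusionMatrix e)ᴴ‖ := congrArg _ hM'
    _ ≤ ‖inclusionMatrix e‖ * ‖M.submatrix e e‖ * ‖inclusionMatrix e‖ := by
        grw [l2_opNorm_mul, l2_opNorm_mul, l2_opNorm_conjTranspose]
    _ ≤ 1 * ‖M.submatrix e e‖ * 1 := by gcongr
    _ = ‖M.submatrix e e‖ := by ring

end L2OpNorm

namespace SimpleGraph

variable {V : Type*} {G : SimpleGraph V}

def trailVertices (G : SimpleGraph V) (i j : V) : Set V :=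
  {v | ∃ W : G.Walk i j, W.IsTrail ∧ v ∈ W.support}

namespace Walk

lemma mem_sym2_of_mem_edges {S : Set V} {u v : V} (W : G.Walk u v)
    (hS : ∀ x ∈ W.support, x ∈ S) {e : Sym2 V} (he : e ∈ W.edges) : e ∈ S.sym2 :=
  Set.mem_sym2_iff_subset.2 fun _ hx => hS _ (W.mem_support_of_mem_edges he hx)

lemma exists_eq_append_of_mem {A : Set V} {w x : V} (W : G.Walk w x) (hx : x ∈ A) :
    ∃ z ∈ A, ∃ (R : G.Walk w z) (R' : G.Walk z x), W = R.append R' ∧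
      ∀ e ∈ R.edges, e ∉ A.sym2 := by
  induction W with
  | nil => exact ⟨_, hx, nil, nil, rfl, by simp⟩
  | @cons w w' x h W' ih =>
    by_cases hw : w ∈ A
    · exact ⟨w, hw, nil, cons h W', rfl, by simp⟩
    · obtain ⟨z, hz, R, R', rfl, hR⟩ := ih hx
      refine ⟨z, hz, cons h R, R', rfl, ?_⟩
      simp only [edges_cons, List.mem_cons, forall_eq_or_imp, Set.mk_mem_sym2_iff]
      exact ⟨fun h' => hw h'.1, hR⟩

end Walk

variable {i j : V}

lemma mem_trailVertices_of_mem_support {W : G.Walk i j} (hW : W.IsTrail) {v : V}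
    (hv : v ∈ W.support) : v ∈ G.trailVertices i j :=
  ⟨W, hW, hv⟩

lemma support_subset_trailVertices_of_append {x y : V} {T₁ : G.Walk i x} {T₂ : G.Walk x j}
    (hT : (T₁.append T₂).IsTrail) (hy : y ∈ T₂.support) {Q : G.Walk x y} (hQ : Q.IsTrail)
    (hdisj : ∀ e ∈ Q.edges, e ∉ (T₁.append T₂).edges) :
    ∀ v ∈ Q.support, v ∈ G.trailVertices i j := by
  obtain ⟨T₂₁, T₂₂, rfl⟩ := Walk.mem_support_iff_exists_append.1 hy
  refine fun v hv => mem_trailVertices_of_mem_support (W := T₁.append (Q.append T₂₂)) ?_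
    (by simp [Walk.mem_support_append_iff, hv])
  have hsub : List.Sublist (T₁.edges ++ T₂₂.edges) (T₁.append (T₂₁.append T₂₂)).edges := by
    simpa [Walk.edges_append] using (List.sublist_append_right _ _).append_left _
  rw [Walk.isTrail_def, Walk.edges_append, Walk.edges_append,
    (List.perm_append_comm_assoc _ _ _).nodup_iff, List.nodup_append]
  exact ⟨hQ.edges_nodup, hT.edges_nodup.sublist hsub,
    fun e he e' he' hee' => hdisj e he (hsub.subset (hee' ▸ he'))⟩

lemma support_subset_trailVertices_of_edges_disjoint {T : G.Walk i j} (hT : T.IsTrail)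
    {u z : V} (hu : u ∈ T.support) (hz : z ∈ T.support) {Q : G.Walk u z} (hQ : Q.IsTrail)
    (hdisj : ∀ e ∈ Q.edges, e ∉ T.edges) : ∀ v ∈ Q.support, v ∈ G.trailVertices i j := by
  obtain ⟨T₁, T₂, rfl⟩ := Walk.mem_support_iff_exists_append.1 hu
  rcases (Walk.mem_support_append_iff T₁ T₂).1 hz with hz₁ | hz₂
  · obtain ⟨T₁₁, T₁₂, rfl⟩ := Walk.mem_support_iff_exists_append.1 hz₁
    intro v hv
    refine support_subset_trailVertices_of_append (T₁ := T₁₁) (T₂ := T₁₂.append T₂)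
      (by rwa [Walk.append_assoc]) (by simp) hQ.reverse ?_ v (by simp [hv])
    simpa [Walk.edges_reverse, Walk.append_assoc] using hdisj
  · exact support_subset_trailVertices_of_append hT hz₂ hQ hdisj

lemma support_subset_trailVertices_of_edges_notMem_sym2 {u w : V}
    (hu : u ∈ G.trailVertices i j) (hw : w ∈ G.trailVertices i j) {Q : G.Walk u w}
    (hQ : Q.IsTrail) (hQP : ∀ e ∈ Q.edges, e ∉ (G.trailVertices i j).sym2) :
    ∀ v ∈ Q.support, v ∈ G.trailVertices i j := by
  obtain ⟨T, hT, huT⟩ := hu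
  obtain ⟨T', hT', hwT'⟩ := hw
  obtain ⟨T'₁, T'₂, rfl⟩ := Walk.mem_support_iff_exists_append.1 hwT'
  obtain ⟨z, hzT, R, R', rfl, hRT⟩ :=
    T'₂.exists_eq_append_of_mem (A := {v | v ∈ T.support}) T.end_mem_support
  have hRP : ∀ v ∈ R.support, v ∈ G.trailVertices i j := fun v hv =>
    mem_trailVertices_of_mem_support hT' (by simp [Walk.mem_support_append_iff, hv])
  have hQR : (Q.append R).IsTrail := by
    rw [Walk.isTrail_def, Walk.edges_append, List.nodup_append]
    refine ⟨hQ.edges_nodup, (hT'.of_append_right.of_append_left).edges_nodup, ?_⟩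
    rintro e he _ he' rfl
    exact hQP e he (R.mem_sym2_of_mem_edges hRP he')
  intro v hv
  refine support_subset_trailVertices_of_edges_disjoint hT huT hzT hQR ?_ v
    (by simp [Walk.mem_support_append_iff, hv])
  intro e he heT
  rcases List.mem_append.1 (Walk.edges_append Q R ▸ he) with heQ | heR
  · exact hQP e heQ (T.mem_sym2_of_mem_edges (fun _ => mem_trailVertices_of_mem_support hT) heT)
  · exact hRT e heR (T.mem_sym2_of_mem_edges (fun _ hx => hx) heT)

lemma eq_of_reachable_deleteEdges_sym2_trailVertices {u w : V}
    (h : (G.deleteEdges (G.trailVertices i j).sym2).Reachable u w)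
    (hu : u ∈ G.trailVertices i j) (hw : w ∈ G.trailVertices i j) : u = w := by
  classical
  obtain ⟨W⟩ := h
  set Q := W.bypass.mapLe (G.deleteEdges_le _)
  have hQP : ∀ e ∈ Q.edges, e ∉ (G.trailVertices i j).sym2 := fun e he =>
    ((edgeSet_deleteEdges _ ▸ W.bypass.edges_subset_edgeSet
      (Walk.edges_mapLe_eq_edges _ _ ▸ he)) : e ∈ G.edgeSet \ _).2
  have hQsupp := support_subset_trailVertices_of_edges_notMem_sym2 hu hw
    (W.bypass_isPath.isTrail.mapLe _) hQP
  have hQnil : Q.Nil := Walk.edges_eq_nil.1 <| List.eq_nil_iff_forall_not_mem.2 fun e he =>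
    hQP e he (Q.mem_sym2_of_mem_edges hQsupp he)
  exact hQnil.eq

lemma exists_extend_of_reachable_eq {H : SimpleGraph V} {S : Set V}
    (hS : ∀ x ∈ S, ∀ y ∈ S, H.Reachable x y → x = y) {β : Type*} [Nonempty β] (f : S → β) :
    ∃ g : V → β, (∀ x : S, g x = f x) ∧ ∀ x y, H.Adj x y → g x = g y := by
  classical
  let c : H.ConnectedComponent → β := fun C =>
    if h : ∃ x : S, H.connectedComponentMk x = C then f h.choose else Classical.arbitrary β
  refine ⟨fun v => c (H.connectedComponentMk v), fun x => ?_, fun x y hxy => ?_⟩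
  · have h : ∃ y : S, H.connectedComponentMk y = H.connectedComponentMk x := ⟨x, rfl⟩
    simp only [c, dif_pos h]
    exact congrArg f (Subtype.ext (hS _ h.choose.2 _ x.2 (ConnectedComponent.exact h.choose_spec)))
  · simp only [ConnectedComponent.connectedComponentMk_eq_of_adj hxy]

end SimpleGraph

section Dirac

open SimpleGraph

variable {ι : Type*} {D : Matrix ι ι ℂ}

def diracGraph (D : Matrix ι ι ℂ) : SimpleGraph ι :=
  SimpleGraph.fromRel fun u v => D u v ≠ 0

lemma diracGraph_adj_iff (hD : D.IsHermitian) {u v : ι} : (diracGraph D).Adj u v ↔ Adjac D u v := by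
  have h : D v u ≠ 0 ↔ D u v ≠ 0 := by rw [← hD.apply v u, star_ne_zero]
  simp only [diracGraph, fromRel_adj, Adjac, h, or_self]

lemma walkEdges_eq_zipWith (u : ι) (p : List ι) :
    walkEdges u p = List.zipWith (s(·, ·)) (u :: p) p := by
  induction p generalizing u with
  | nil => rfl
  | cons v p ih => simp [walkEdges, ih]

lemma isTrail_iff_exists_walk (hD : D.IsHermitian) {i j : ι} {p : List ι} :
    IsTrail D i j p ↔ ∃ W : (diracGraph D).Walk i j, W.IsTrail ∧ W.support = i :: p := by
  have hadj : (diracGraph D).Adj = Adjac D := by ext; exact diracGraph_adj_iff hD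
  constructor
  · rintro ⟨⟨hchain, rfl⟩, hnodup⟩
    have hchain' : List.IsChain (diracGraph D).Adj (i :: p) := by rw [hadj]; exact hchain
    let W : (diracGraph D).Walk i _ := Walk.ofSupport (i :: p) (List.cons_ne_nil _ _) hchain'
    have hW : W.support = i :: p := Walk.support_ofSupport _ _
    refine ⟨W, ?_, hW⟩
    rw [Walk.isTrail_def, Walk.edges_eq_zipWith_support, hW, List.tail_cons, ← walkEdges_eq_zipWith]
    exact hnodup
  · rintro ⟨W, hW, hsupp⟩
    refine ⟨⟨?_, ?_⟩, ?_⟩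
    · have h := W.isChain_adj_support
      rwa [hsupp, hadj] at h
    · simp_rw [← hsupp, Walk.getLast_support]
    · have h := hW.edges_nodup
      rwa [Walk.edges_eq_zipWith_support, hsupp, List.tail_cons, ← walkEdges_eq_zipWith] at h

lemma pathSet_eq_trailVertices (hD : D.IsHermitian) (i j : ι) :
    pathSet D i j = (diracGraph D).trailVertices i j := by
  ext v
  constructor
  · rintro ⟨p, hp, hv⟩
    obtain ⟨W, hW, hsupp⟩ := (isTrail_iff_exists_walk hD).1 hp
    exact ⟨W, hW, hsupp ▸ hv⟩
  · rintro ⟨W, hW, hv⟩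
    exact ⟨W.support.tail, (isTrail_iff_exists_walk hD).2 ⟨W, hW, W.cons_tail_support.symm⟩,
      W.cons_tail_support ▸ hv⟩

lemma exists_extend_pathSet (hD : D.IsHermitian) (i j : ι) (a' : pathSet D i j → ℂ) :
    ∃ a : ι → ℂ, (∀ x : pathSet D i j, a x = a' x) ∧
      ∀ x y, D x y ≠ 0 → (x ∉ pathSet D i j ∨ y ∉ pathSet D i j) → a x = a y := by
  obtain ⟨a, ha, hadj⟩ := exists_extend_of_reachable_eq
    (H := (diracGraph D).deleteEdges (pathSet D i j).sym2) (fun x hx y hy hxy => by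
      rw [pathSet_eq_trailVertices hD] at hx hy hxy
      exact eq_of_reachable_deleteEdges_sym2_trailVertices hxy hx hy) a'
  refine ⟨a, ha, fun x y hxy hout => ?_⟩
  by_cases hne : x = y
  · rw [hne]
  · refine hadj x y (deleteEdges_adj.2 ⟨(fromRel_adj _ _ _).2 ⟨hne, Or.inl hxy⟩, ?_⟩)
    rwa [Set.mk_mem_sym2_iff, not_and_or]

end Dirac

section NCDist

open Matrix
open scoped Matrix.Norms.L2Operator

variable {ι : Type*} [Finite ι]

lemma commD_apply (D : Matrix ι ι ℂ) (a : ι → ℂ) (x y : ι) :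
    commD D a x y = D x y * (a y - a x) := by
  simp only [commD, Matrix.sub_apply, mul_diagonal, diagonal_mul]
  ring

lemma commD_submatrix (D : Matrix ι ι ℂ) (S : Set ι) (a : ι → ℂ) :
    commD (D.submatrix (Subtype.val : S → ι) Subtype.val) (fun x => a x) =
      (commD D a).submatrix Subtype.val Subtype.val := by
  ext x y
  simp [commD_apply]

lemma ncDist_le_ncDist_submatrix (D : Matrix ι ι ℂ) (S : Set ι) (i j : S) :
    ncDist D i j ≤ ncDist (D.submatrix (Subtype.val : S → ι) Subtype.val) i j := by
  cases nonempty_fintype ι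
  classical
  refine iSup₂_le fun a ha => le_iSup₂_of_le (fun x : S => a x) ?_ le_rfl
  rw [commD_submatrix, opNorm_eq_l2_opNorm]
  rw [opNorm_eq_l2_opNorm] at ha
  exact (l2_opNorm_submatrix_le _ Subtype.val_injective).trans ha

lemma ncDist_submatrix_le_of_exists_extend (D : Matrix ι ι ℂ) (S : Set ι)
    (hext : ∀ a' : S → ℂ, ∃ a : ι → ℂ, (∀ x : S, a x = a' x) ∧
      ∀ x y, D x y ≠ 0 → (x ∉ S ∨ y ∉ S) → a x = a y) (i j : S) :
    ncDist (D.submatrix (Subtype.val : S → ι) Subtype.val) i j ≤ ncDist D i j := by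
  cases nonempty_fintype ι
  classical
  refine iSup₂_le fun a' ha' => ?_
  obtain ⟨a, ha, hconst⟩ := hext a'
  have hrestrict : (fun x : S => a x) = a' := funext ha
  have hsupp : ∀ x y, commD D a x y ≠ 0 → x ∈ Set.range (Subtype.val : S → ι) ∧
      y ∈ Set.range (Subtype.val : S → ι) := by
    intro x y hxy
    rw [commD_apply, mul_ne_zero_iff, sub_ne_zero] at hxy
    rw [Subtype.range_coe]
    by_contra hout
    exact hxy.2 (hconst x y hxy.1 (not_and_or.1 hout)).symm
  refine le_iSup₂_of_le a ?_ (by rw [ha, ha])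
  rw [opNorm_eq_l2_opNorm]
  rw [opNorm_eq_l2_opNorm, ← hrestrict, commD_submatrix] at ha'
  exact (l2_opNorm_le_submatrix _ Subtype.val_injective hsupp).trans ha'

end NCDist

theorem stmt4_general {n : ℕ} (D : Matrix (Fin n) (Fin n) ℂ)
    (hherm : D.IsHermitian) (i j : Fin n)
    (hi : i ∈ pathSet D i j) (hj : j ∈ pathSet D i j) :
    ncDist D i j =
      ncDist (D.submatrix (Subtype.val : pathSet D i j → Fin n) Subtype.val)
        ⟨i, hi⟩ ⟨j, hj⟩ :=
  le_antisymm (ncDist_le_ncDist_submatrix D _ ⟨i, hi⟩ ⟨j, hj⟩)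
    (ncDist_submatrix_le_of_exists_extend D _ (exists_extend_pathSet hherm i j) _ _)

theorem stmt4 {n : ℕ} (D : Matrix (Fin n) (Fin n) ℂ)
    (hherm : D.IsHermitian) (hdiag : ∀ i, D i i = 0) (i j : Fin n)
    (hconn : Conn D i j) (hi : i ∈ pathSet D i j) (hj : j ∈ pathSet D i j) :
    ncDist D i j =
      ncDist (D.submatrix (Subtype.val : pathSet D i j → Fin n) Subtype.val)
        ⟨i, hi⟩ ⟨j, hj⟩ :=
  stmt4_general D hherm i j hi hj
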